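/- arXiv:2502.21285 — 4 statements merged into one kernel-verified Lean document; each statement's English description precedes it below -/
import Mathlib

section
/- Define μ̂ : ℕ → ℤ by μ̂(n) = μ(n) if n is odd, and μ̂(n) = 2^(j-1)·μ(n/2^j) if n is even where 2^j is the largest power of 2 dividing n (so n/2^j is odd). Then for every n ≥ 1, the Dirichlet convolution identity ∑_{d ∣ n} (-1)^(n/d + 1) · μ̂(d) equals 1 if n = 1 and equals 0 if n > 1. In other words, μ̂ is the Dirichlet inverse of the arithmetic function d ↦ (-1)^(d+1). -/
open ArithmeticFunction

/-- `μ̂(n)`: the Dirichlet inverse of `d ↦ (-1)^(d+1)`. -/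
noncomputable def muHat (n : ℕ) : ℤ :=
  if Odd n then moebius n
  else 2 ^ (n.factorization 2 - 1) * moebius (n / 2 ^ (n.factorization 2))

lemma muHat_odd {n : ℕ} (h : Odd n) : muHat n = moebius n := if_pos h

lemma muHat_two_pow {i : ℕ} (hi : 1 ≤ i) : muHat (2 ^ i) = 2 ^ (i - 1) := by
  have h2 : ¬ Odd (2 ^ i) := by
    rw [Nat.not_odd_iff_even, Nat.even_pow]
    exact ⟨even_two, by omega⟩
  have hf : (2 ^ i : ℕ).factorization 2 = i := by
    rw [Nat.Prime.factorization_pow Nat.prime_two]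
    simp
  rw [muHat, if_neg h2, hf, Nat.div_self (by positivity)]
  simp

lemma muHat_mul_coprime {a b : ℕ} (ha : a ≠ 0) (hb : b ≠ 0) (hab : Nat.Coprime a b) :
    muHat (a * b) = muHat a * muHat b := by
  -- helper for the case a even, b odd
  have key : ∀ a b : ℕ, a ≠ 0 → b ≠ 0 → Nat.Coprime a b → ¬ Odd a → Odd b →
      muHat (a * b) = muHat a * muHat b := by
    intro a b ha hb hab hea hob
    have hne : ¬ Odd (a * b) := by
      rw [Nat.not_odd_iff_even] at hea ⊢
      exact hea.mul_right b
    have hb2 : b.factorization 2 = 0 :=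
      Nat.factorization_eq_zero_of_not_dvd (by have := Nat.odd_iff.mp hob; omega)
    have hfab : (a * b).factorization 2 = a.factorization 2 := by
      rw [Nat.factorization_mul ha hb]; simp [hb2]
    set j := a.factorization 2 with hj
    have hdvd : 2 ^ j ∣ a := Nat.ordProj_dvd a 2
    have hdiv : a * b / 2 ^ j = (a / 2 ^ j) * b := by
      rw [mul_comm a b, Nat.mul_div_assoc b hdvd, mul_comm]
    have hcop : Nat.Coprime (a / 2 ^ j) b := Nat.Coprime.coprime_dvd_left (Nat.div_dvd_of_dvd hdvd) hab
    rw [muHat, if_neg hne, hfab, hdiv, isMultiplicative_moebius.map_mul_of_coprime hcop,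
      muHat, if_neg hea, muHat_odd hob]
    ring
  by_cases hoa : Odd a <;> by_cases hob : Odd b
  · have : Odd (a * b) := hoa.mul hob
    rw [muHat_odd this, muHat_odd hoa, muHat_odd hob,
      isMultiplicative_moebius.map_mul_of_coprime hab]
  · rw [mul_comm, mul_comm (muHat a)]
    exact key b a hb ha hab.symm hob hoa
  · exact key a b ha hb hab hoa hob
  · exfalso
    rw [Nat.not_odd_iff_even] at hoa hob
    have h2 : (2 : ℕ) ∣ Nat.gcd a b := Nat.dvd_gcd hoa.two_dvd hob.two_dvd
    rw [hab] at h2; omega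

/-- `muHat` as an arithmetic function. -/
noncomputable def muHatA : ArithmeticFunction ℤ :=
  ⟨fun n => if n = 0 then 0 else muHat n, rfl⟩

lemma muHatA_apply {n : ℕ} (hn : n ≠ 0) : muHatA n = muHat n := if_neg hn

lemma muHatA_mult : muHatA.IsMultiplicative := by
  refine ⟨?_, ?_⟩
  · rw [muHatA_apply one_ne_zero, muHat_odd odd_one]; simp
  · intro a b hab
    rcases eq_or_ne a 0 with rfl | ha
    · have : b = 1 := by simpa using hab
      subst this; simp [muHatA]
    rcases eq_or_ne b 0 with rfl | hb
    · have : a = 1 := by simpa [Nat.coprime_zero_right] using hab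
      subst this; simp [muHatA]
    rw [muHatA_apply (mul_ne_zero ha hb), muHatA_apply ha, muHatA_apply hb,
      muHat_mul_coprime ha hb hab]

/-- The function `d ↦ (-1)^(d+1)` as an arithmetic function. -/
noncomputable def signA : ArithmeticFunction ℤ :=
  ⟨fun n => if n = 0 then 0 else (-1) ^ (n + 1), rfl⟩

lemma signA_apply {n : ℕ} (hn : n ≠ 0) : signA n = (-1) ^ (n + 1) := if_neg hn

lemma signA_odd {n : ℕ} (h : Odd n) : signA n = 1 := by
  rcases h with ⟨k, rfl⟩
  rw [signA_apply (by omega)]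
  have : 2 * k + 1 + 1 = 2 * (k + 1) := by ring
  rw [this, pow_mul]; norm_num

lemma signA_even {n : ℕ} (h : Even n) (hn : n ≠ 0) : signA n = -1 := by
  rcases h with ⟨k, rfl⟩
  rw [signA_apply hn]
  have : k + k + 1 = 2 * k + 1 := by ring
  rw [this, pow_succ, pow_mul]; norm_num

lemma signA_mult : signA.IsMultiplicative := by
  refine ⟨by rw [signA_odd odd_one], ?_⟩
  intro a b hab
  rcases eq_or_ne a 0 with rfl | ha
  · have : b = 1 := by simpa using hab
    subst this; simp [signA]
  rcases eq_or_ne b 0 with rfl | hb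
  · have : a = 1 := by simpa [Nat.coprime_zero_right] using hab
    subst this; simp [signA]
  by_cases hoa : Odd a <;> by_cases hob : Odd b
  · rw [signA_odd (hoa.mul hob), signA_odd hoa, signA_odd hob]; ring
  · rw [Nat.not_odd_iff_even] at hob
    rw [signA_odd hoa, signA_even (hob.mul_left a) (mul_ne_zero ha hb), signA_even hob hb]; ring
  · rw [Nat.not_odd_iff_even] at hoa
    rw [signA_odd hob, signA_even (hoa.mul_right b) (mul_ne_zero ha hb), signA_even hoa ha]; ring
  · exfalso
    rw [Nat.not_odd_iff_even] at hoa hob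
    have h2 : (2 : ℕ) ∣ Nat.gcd a b := Nat.dvd_gcd hoa.two_dvd hob.two_dvd
    rw [hab] at h2; omega

lemma sum_muHat_two_pow (k : ℕ) (hk : 1 ≤ k) :
    ∑ i ∈ Finset.range k, muHat (2 ^ i) = 2 ^ (k - 1) := by
  induction k with
  | zero => omega
  | succ m ih =>
    rcases Nat.eq_or_lt_of_le hk with h | h
    · simp [← h, muHat_odd odd_one]
    · have hm : 1 ≤ m := by omega
      rw [Finset.sum_range_succ, ih hm, muHat_two_pow hm]
      have e2 : m + 1 - 1 = m - 1 + 1 := by omega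
      rw [e2, pow_succ]
      ring

lemma sum_moebius_prime_pow {p k : ℕ} (hp : p.Prime) (hk : 1 ≤ k) :
    ∑ x ∈ Finset.range (k + 1), (moebius (p ^ x) : ℤ) = 0 := by
  induction k with
  | zero => omega
  | succ m ih =>
    rcases Nat.eq_or_lt_of_le hk with h | h
    · simp [← h, Finset.sum_range_succ, moebius_apply_prime hp]
    · have hm : 1 ≤ m := by omega
      rw [Finset.sum_range_succ, ih hm,
        moebius_apply_prime_pow hp (by omega : m + 1 ≠ 0), if_neg (by omega)]
      simp

lemma conv_eq_one : signA * muHatA = 1 := by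
  rw [ArithmeticFunction.IsMultiplicative.eq_iff_eq_on_prime_powers _ (signA_mult.mul muHatA_mult) _
    ArithmeticFunction.isMultiplicative_one]
  intro p i hp
  rcases Nat.eq_zero_or_pos i with rfl | hi
  · simp [(signA_mult.mul muHatA_mult).map_one, ArithmeticFunction.isMultiplicative_one.map_one]
  have hpk : p ^ i ≠ 1 := (Nat.one_lt_pow (by omega) hp.one_lt).ne'
  rw [ArithmeticFunction.one_apply_ne hpk, ArithmeticFunction.mul_apply,
    Nat.sum_divisorsAntidiagonal' (f := fun x y => signA x * muHatA y),
    Nat.sum_divisors_prime_pow hp]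
  rcases hp.eq_two_or_odd' with rfl | hodd
  · -- p = 2
    have hterm : ∀ x ∈ Finset.range (i + 1),
        signA (2 ^ i / 2 ^ x) * muHatA (2 ^ x) =
          (if x = i then (2:ℤ) ^ (i - 1) else -muHat (2 ^ x)) := by
      intro x hx
      rw [Finset.mem_range] at hx
      have hxle : x ≤ i := by omega
      rw [Nat.pow_div hxle (by norm_num), muHatA_apply (by positivity)]
      rcases eq_or_lt_of_le hxle with rfl | hlt
      · rw [if_pos rfl]
        simp only [Nat.sub_self, pow_zero]
        rw [signA_odd odd_one, muHat_two_pow hi, one_mul]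
      · rw [if_neg (by omega)]
        have : Even (2 ^ (i - x)) := by
          refine (Nat.even_pow).mpr ⟨even_two, by omega⟩
        rw [signA_even this (by positivity)]
        ring
    rw [Finset.sum_congr rfl hterm, Finset.sum_range_succ, if_pos rfl]
    have hrest : ∑ x ∈ Finset.range i, (if x = i then (2:ℤ) ^ (i - 1) else -muHat (2 ^ x)) =
        -∑ x ∈ Finset.range i, muHat (2 ^ x) := by
      rw [← Finset.sum_neg_distrib]
      exact Finset.sum_congr rfl fun x hx => if_neg (by rw [Finset.mem_range] at hx; omega)
    rw [hrest, sum_muHat_two_pow i hi]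
    ring
  · -- p odd
    have hterm : ∀ x ∈ Finset.range (i + 1),
        signA (p ^ i / p ^ x) * muHatA (p ^ x) = moebius (p ^ x) := by
      intro x hx
      rw [Finset.mem_range] at hx
      have hxle : x ≤ i := by omega
      have hppos : 0 < p := hp.pos
      rw [Nat.pow_div hxle hppos, muHatA_apply (by positivity),
        signA_odd (hodd.pow), muHat_odd (hodd.pow), one_mul]
    rw [Finset.sum_congr rfl hterm]
    exact sum_moebius_prime_pow hp hi

theorem muHat_dirichlet_inverse (n : ℕ) (hn : 1 ≤ n) :
    ∑ d ∈ n.divisors, (-1 : ℤ) ^ (n / d + 1) * muHat d =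
      if n = 1 then 1 else 0 := by
  have h := congrArg (fun f : ArithmeticFunction ℤ => f n) conv_eq_one
  simp only [ArithmeticFunction.mul_apply] at h
  rw [Nat.sum_divisorsAntidiagonal' (f := fun x y => signA x * muHatA y)] at h
  have hterm : ∀ d ∈ n.divisors, signA (n / d) * muHatA d = (-1 : ℤ) ^ (n / d + 1) * muHat d := by
    intro d hd
    rw [Nat.mem_divisors] at hd
    have hd0 : d ≠ 0 := by rintro rfl; exact hd.2 (Nat.eq_zero_of_zero_dvd hd.1)
    have hnd : n / d ≠ 0 := by
      have := Nat.div_pos (Nat.le_of_dvd (by omega) hd.1) (Nat.pos_of_ne_zero hd0)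
      omega
    rw [signA_apply hnd, muHatA_apply hd0]
  rw [Finset.sum_congr rfl hterm] at h
  rw [h]
  rcases eq_or_ne n 1 with rfl | h1
  · simp [ArithmeticFunction.one_apply]
  · simp [ArithmeticFunction.one_apply_ne h1, h1]
end

section
/- Let P : ℕ → ℚ and define L : ℕ → ℚ by n · L(n) = ∑_{d ∣ n} μ(n/d) · P(d). Define c : ℕ → ℚ by k · c(k) = ∑_{d ∣ k} μ(k/d) · (-1)^(d+1) · P(d). Then: (i) c(k) = L(k) if k is odd; (ii) c(k) = -L(k) if 4 divides k; (iii) c(k) = -L(k) - L(k/2) if k ≡ 2 (mod 4). -/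
open ArithmeticFunction

theorem c_exponents (P L c : ℕ → ℚ)
    (hL : ∀ n : ℕ, 1 ≤ n →
      (n : ℚ) * L n = ∑ d ∈ n.divisors, (moebius (n / d) : ℚ) * P d)
    (hc : ∀ k : ℕ, 1 ≤ k →
      (k : ℚ) * c k = ∑ d ∈ k.divisors, (moebius (k / d) : ℚ) * (-1 : ℚ) ^ (d + 1) * P d) :
    ∀ k : ℕ, 1 ≤ k →
      (Odd k → c k = L k) ∧
      (4 ∣ k → c k = -L k) ∧
      (k % 4 = 2 → c k = -L k - L (k / 2)) := by
  intro k hk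
  have hk0 : (k : ℚ) ≠ 0 := Nat.cast_ne_zero.mpr (by omega)
  have key : ∀ d ∈ k.divisors,
      (moebius (k / d) : ℚ) * (-1 : ℚ) ^ (d + 1) * P d =
      2 * (if ¬ 2 ∣ d then (moebius (k / d) : ℚ) * P d else 0)
        - (moebius (k / d) : ℚ) * P d := by
    intro d _
    by_cases h : 2 ∣ d
    · rw [if_neg (not_not_intro h)]
      obtain ⟨e, rfl⟩ := h
      have hpow : (-1 : ℚ) ^ (2 * e + 1) = -1 := by
        rw [pow_succ, pow_mul]; norm_num
      rw [hpow]; ring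
    · rw [if_pos h]
      have hodd : Even (d + 1) := by
        rw [Nat.even_add_one]
        exact fun he => h he.two_dvd
      rw [hodd.neg_one_pow]; ring
  have hsplit : (k : ℚ) * c k =
      2 * (∑ d ∈ k.divisors.filter (fun d => ¬ 2 ∣ d), (moebius (k / d) : ℚ) * P d)
        - (k : ℚ) * L k := by
    rw [hc k hk, Finset.sum_congr rfl key, Finset.sum_sub_distrib, hL k hk,
      ← Finset.mul_sum, Finset.sum_filter]
  refine ⟨?_, ?_, ?_⟩
  · -- k odd
    intro hodd
    have hfil : k.divisors.filter (fun d => ¬ 2 ∣ d) = k.divisors := by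
      apply Finset.filter_true_of_mem
      intro d hd h2
      have h2k : 2 ∣ k := h2.trans (Nat.mem_divisors.mp hd).1
      obtain ⟨r, hr⟩ := hodd
      omega
    rw [hfil, ← hL k hk] at hsplit
    have : (k : ℚ) * c k = (k : ℚ) * L k := by linarith
    exact mul_left_cancel₀ hk0 this
  · -- 4 ∣ k
    intro h4
    have hzero : ∑ d ∈ k.divisors.filter (fun d => ¬ 2 ∣ d),
        (moebius (k / d) : ℚ) * P d = 0 := by
      apply Finset.sum_eq_zero
      intro d hd
      obtain ⟨hd, h2d⟩ := Finset.mem_filter.mp hd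
      obtain ⟨hdvd, -⟩ := Nat.mem_divisors.mp hd
      have hdpos : 0 < d := Nat.pos_of_mem_divisors hd
      have hcop2 : Nat.Coprime d 2 :=
        Nat.coprime_two_right.mpr (Nat.odd_iff.mpr (by omega))
      have hcop : Nat.Coprime d 4 := by
        have := hcop2.pow_right 2
        norm_num at this
        exact this
      have h4d : 4 ∣ k / d := by
        obtain ⟨m, hm⟩ := hdvd
        subst hm
        rw [Nat.mul_div_cancel_left m hdpos]
        exact Nat.Coprime.dvd_of_dvd_mul_left hcop.symm h4
      have hnsq : ¬ Squarefree (k / d) := by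
        intro hsq
        have := hsq 2 (by obtain ⟨m, hm⟩ := h4d; exact ⟨m, by omega⟩)
        norm_num at this
      rw [moebius_eq_zero_of_not_squarefree hnsq]
      simp
    rw [hzero] at hsplit
    have : (k : ℚ) * c k = (k : ℚ) * (-L k) := by rw [hsplit]; ring
    exact mul_left_cancel₀ hk0 this
  · -- k % 4 = 2
    intro hmod
    have hk2 : 2 ∣ k := by omega
    have hko : ¬ 2 ∣ (k / 2) := by omega
    have hk2pos : 1 ≤ k / 2 := by omega
    have hfil : k.divisors.filter (fun d => ¬ 2 ∣ d) = (k / 2).divisors := by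
      ext d
      simp only [Finset.mem_filter, Nat.mem_divisors]
      constructor
      · rintro ⟨⟨hdk, hk0'⟩, h2d⟩
        refine ⟨?_, by omega⟩
        have hcop : Nat.Coprime 2 d :=
          Nat.coprime_two_left.mpr (Nat.odd_iff.mpr (by omega))
        have hdk2 : d ∣ 2 * (k / 2) := by
          have h2k2 : 2 * (k / 2) = k := by omega
          rw [h2k2]; exact hdk
        exact Nat.Coprime.dvd_of_dvd_mul_left hcop.symm hdk2
      · rintro ⟨hdk2, -⟩
        have hdodd : ¬ 2 ∣ d := fun h => hko (h.trans hdk2)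
        exact ⟨⟨hdk2.trans (Nat.div_dvd_of_dvd hk2), by omega⟩, hdodd⟩
    have hterm : ∀ d ∈ (k / 2).divisors,
        (moebius (k / d) : ℚ) * P d = -((moebius ((k / 2) / d) : ℚ) * P d) := by
      intro d hd
      obtain ⟨hdvd, -⟩ := Nat.mem_divisors.mp hd
      have hdpos : 0 < d := Nat.pos_of_mem_divisors hd
      obtain ⟨m, hm⟩ := hdvd
      have hkm : k = 2 * (d * m) := by omega
      have h1 : k / d = 2 * m := by
        rw [hkm, show 2 * (d * m) = d * (2 * m) by ring, Nat.mul_div_cancel_left _ hdpos]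
      have h2 : (k / 2) / d = m := by
        rw [hm, Nat.mul_div_cancel_left _ hdpos]
      have hcop : Nat.Coprime 2 m := by
        apply Nat.coprime_two_left.mpr
        apply Nat.odd_iff.mpr
        have hmk2 : m ∣ k / 2 := ⟨d, by rw [hm]; ring⟩
        have : ¬ 2 ∣ m := fun h => hko (h.trans hmk2)
        omega
      rw [h1, h2, show 2 * m = 2 * m from rfl,
        isMultiplicative_moebius.map_mul_of_coprime hcop,
        moebius_apply_prime Nat.prime_two]
      push_cast
      ring
    rw [hfil, Finset.sum_congr rfl hterm, Finset.sum_neg_distrib, ← hL (k / 2) hk2pos]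
      at hsplit
    have hcast : 2 * ((k / 2 : ℕ) : ℚ) = (k : ℚ) := by
      have h2k2 : 2 * (k / 2) = k := by omega
      exact_mod_cast congrArg (Nat.cast : ℕ → ℚ) h2k2
    have : (k : ℚ) * c k = (k : ℚ) * (-L k - L (k / 2)) := by
      rw [hsplit, ← hcast]; ring
    exact mul_left_cancel₀ hk0 this
end

section
/- Let L : ℕ → ℚ and define P(n) = ∑_{k ∣ n} k · L(k). Define b : ℕ → ℚ by b(k) = ∑_{j ≥ 0, 2^j ∣ k} L(k / 2^j). Then for all n ≥ 1, ∑_{k ∣ n} (-1)^(n/k + 1) · k · b(k) = P(n). -/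
/-- `b(k) = ∑_{j ≥ 0, 2^j ∣ k} L(k / 2^j)` (all such `j` satisfy `j ≤ k` for `k ≥ 1`). -/
def bExp (L : ℕ → ℚ) (k : ℕ) : ℚ :=
  ∑ j ∈ Finset.range (k + 1), if 2 ^ j ∣ k then L (k / 2 ^ j) else 0

/-!
With `f k = k * b k` and `g k = k * L k`, the definition of `b` gives the recursion
`f k = g k + 2 f (k / 2)` for even `k` and `f k = g k` for odd `k`. As
`(-1) ^ (m + 1) = 1 - 2 [2 ∣ m]`, the signed sum is `∑_{k ∣ n} f k - 2 ∑_{k ∣ n, 2 ∣ n / k} f k`,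
and `k ↦ 2 k` matches the last sum with the correction `∑_{k ∣ n, 2 ∣ k} f (k / 2)` that the
recursion contributes to `∑_{k ∣ n} f k`.
-/

open Finset

lemma neg_one_pow_add_one_mul {R : Type*} [Ring R] (m : ℕ) (x : R) :
    (-1) ^ (m + 1) * x = x - if 2 ∣ m then 2 * x else 0 := by
  rcases Nat.even_or_odd m with hm | hm
  · rw [if_pos hm.two_dvd, hm.add_one.neg_one_pow]; noncomm_ring
  · rw [if_neg (Nat.not_even_iff_odd.2 hm ∘ even_iff_two_dvd.2), hm.add_one.neg_one_pow]; simp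

lemma Nat.sum_divisors_filter_dvd_div {M : Type*} [AddCommMonoid M] {d : ℕ} (hd : d ≠ 0)
    (n : ℕ) (h : ℕ → M) :
    ∑ k ∈ n.divisors with d ∣ n / k, h k = ∑ k ∈ n.divisors with d ∣ k, h (k / d) := by
  refine sum_nbij' (d * ·) (· / d) ?_ ?_ ?_ ?_ ?_
  · simp only [mem_filter, Nat.mem_divisors]
    rintro k ⟨⟨hkn, hn⟩, hdk⟩
    exact ⟨⟨mul_comm k d ▸ Nat.mul_dvd_of_dvd_div hkn hdk, hn⟩, dvd_mul_right d k⟩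
  · simp only [mem_filter, Nat.mem_divisors]
    rintro _ ⟨⟨hkn, hn⟩, m, rfl⟩
    obtain ⟨t, rfl⟩ := hkn
    have hm : m ≠ 0 := by rintro rfl; simp at hn
    simp only [Nat.mul_div_cancel_left m (Nat.pos_of_ne_zero hd)]
    refine ⟨⟨⟨d * t, by ring⟩, hn⟩, t, ?_⟩
    rw [show d * m * t = m * (d * t) by ring, Nat.mul_div_cancel_left _ (Nat.pos_of_ne_zero hm)]
  · intro k _
    exact Nat.mul_div_cancel_left k (Nat.pos_of_ne_zero hd)
  · intro k hk
    exact Nat.mul_div_cancel' (mem_filter.1 hk).2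
  · intro k _
    simp only [Nat.mul_div_cancel_left k (Nat.pos_of_ne_zero hd)]

theorem sum_divisors_neg_one_pow_mul_eq {R : Type*} [CommRing R] (f g : ℕ → R)
    (hfg : ∀ k ≠ 0, f k = g k + if 2 ∣ k then 2 * f (k / 2) else 0) (n : ℕ) :
    ∑ k ∈ n.divisors, (-1) ^ (n / k + 1) * f k = ∑ k ∈ n.divisors, g k := by
  have hf : ∑ k ∈ n.divisors, f k
      = ∑ k ∈ n.divisors, g k + 2 * ∑ k ∈ n.divisors with 2 ∣ n / k, f k := by
    rw [sum_congr rfl fun k hk => hfg k (Nat.ne_of_gt (Nat.pos_of_mem_divisors hk)),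
      sum_add_distrib, Nat.sum_divisors_filter_dvd_div two_ne_zero, mul_sum, sum_filter]
  simp only [neg_one_pow_add_one_mul, sum_sub_distrib, ← sum_filter, ← mul_sum, hf]
  ring

lemma bExp_eq_sum_range (L : ℕ → ℚ) {k N : ℕ} (hk : k ≠ 0) (hN : k < N) :
    bExp L k = ∑ j ∈ range N, if 2 ^ j ∣ k then L (k / 2 ^ j) else 0 := by
  refine sum_subset (range_subset_range.2 hN) fun j _ hj => if_neg fun hdvd => ?_
  have := Nat.le_of_dvd (Nat.pos_of_ne_zero hk) hdvd
  have := j.lt_two_pow_self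
  simp only [mem_range] at hj
  omega

lemma bExp_eq_add_ite (L : ℕ → ℚ) {k : ℕ} (hk : k ≠ 0) :
    bExp L k = L k + if 2 ∣ k then bExp L (k / 2) else 0 := by
  split_ifs with h2
  · obtain ⟨m, rfl⟩ := h2
    have hm : m ≠ 0 := by rintro rfl; simp at hk
    rw [Nat.mul_div_cancel_left m two_pos, bExp_eq_sum_range L hm (by omega : m < 2 * m), bExp,
      sum_range_succ', add_comm]
    simp only [pow_zero, one_dvd, if_true, Nat.div_one, pow_succ', Nat.mul_div_mul_left _ _ two_pos,
      Nat.mul_dvd_mul_iff_left two_pos]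
  · rw [bExp, sum_eq_single 0 (fun j _ hj => if_neg fun hd => h2 ((dvd_pow_self 2 hj).trans hd))
      (by simp)]
    simp

theorem b_signed_divisor_sum (L : ℕ → ℚ) :
    ∀ n : ℕ, 1 ≤ n →
      ∑ k ∈ n.divisors, (-1 : ℚ) ^ (n / k + 1) * k * bExp L k =
        ∑ k ∈ n.divisors, (↑k * L k) := by
  intro n _
  simp only [mul_assoc]
  refine sum_divisors_neg_one_pow_mul_eq _ _ (fun k hk => ?_) n
  rw [bExp_eq_add_ite L hk]
  split_ifs with h2
  · obtain ⟨m, rfl⟩ := h2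
    rw [Nat.mul_div_cancel_left m two_pos]
    push_cast
    ring
  · ring
end

section
/- Let L : ℕ → ℚ and define P(n) = ∑_{k ∣ n} k · L(k). Define a : ℕ → ℚ by a(k) = L(k) for k odd, and a(k) = -∑_{j ≥ 0, 2^j ∣ k, k/2^j even} L(k/2^j) for k even. Then for all n ≥ 1, ∑_{k ∣ n} (-1)^(n/k + 1) · k · a(k) = (-1)^(n+1) · P(n). -/
/-- `a(k) = L(k)` for odd `k`, and
`a(k) = -∑_{j ≥ 0, 2^j ∣ k, k/2^j even} L(k / 2^j)` for even `k`. -/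
def aExp (L : ℕ → ℚ) (k : ℕ) : ℚ :=
  if Odd k then L k
  else -∑ j ∈ Finset.range (k + 1),
    if 2 ^ j ∣ k ∧ Even (k / 2 ^ j) then L (k / 2 ^ j) else 0

/-!
For `k ≠ 0` the condition `2^j ∣ k ∧ 2 ∣ k / 2^j` says `j < v₂(k)`, so
`a(k) = [k odd] L(k) - ∑_{j < v₂(k)} L(k / 2^j)`, which gives the recursion
`a(2m) = a(m) - L(2m) - [m odd] L(m)`.

For odd `n` every divisor and its cofactor are odd, so both sides agree term by term. For
`n = 2m` the sign `(-1)^(n/k+1)` is `-1` exactly on the divisors of `m`, so with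
`A(n) = ∑_{k ∣ n} k a(k)` the left side is `A(2m) - 2 A(m)`. Splitting the divisors of `2m` into
the odd divisors of `m` and the doubles of divisors of `m`, the recursion turns this into `-P(2m)`.
-/

open Finset

namespace Nat

variable {M : Type*} [AddCommMonoid M]

theorem sum_divisors_two_mul {m : ℕ} (hm : m ≠ 0) (f : ℕ → M) :
    ∑ k ∈ (2 * m).divisors, f k =
      ∑ k ∈ m.divisors with Odd k, f k + ∑ k ∈ m.divisors, f (2 * k) := by
  have hsplit : (2 * m).divisors = {k ∈ m.divisors | Odd k} ∪ m.divisors.image (2 * ·) := by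
    ext k
    simp only [mem_divisors, mem_union, mem_filter, mem_image]
    constructor
    · rintro ⟨hk, -⟩
      rcases Nat.even_or_odd k with heven | hodd
      · obtain ⟨j, rfl⟩ := heven.two_dvd
        exact .inr ⟨j, ⟨(Nat.mul_dvd_mul_iff_left two_pos).mp hk, hm⟩, rfl⟩
      · exact .inl ⟨⟨hodd.coprime_two_right.dvd_of_dvd_mul_left hk, hm⟩, hodd⟩
    · rintro (⟨⟨hk, -⟩, -⟩ | ⟨j, ⟨hj, -⟩, rfl⟩)
      · exact ⟨hk.mul_left 2, by omega⟩
      · exact ⟨mul_dvd_mul_left 2 hj, by omega⟩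
  have hdisj : Disjoint {k ∈ m.divisors | Odd k} (m.divisors.image (2 * ·)) := by
    simp only [disjoint_left, mem_filter, mem_image]
    rintro _ ⟨-, hodd⟩ ⟨j, -, rfl⟩
    exact (Nat.not_odd_iff_even.mpr (even_two_mul j)) hodd
  rw [hsplit, sum_union hdisj, sum_image fun _ _ _ _ h => by omega]

theorem even_two_mul_div_iff {m k : ℕ} (hk : k ∣ 2 * m) : Even (2 * m / k) ↔ k ∣ m := by
  rw [even_iff_two_dvd, Nat.dvd_div_iff_mul_dvd hk, mul_comm]
  exact Nat.mul_dvd_mul_iff_left two_pos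

end Nat

theorem sum_divisors_two_mul_neg_one_pow {R : Type*} [CommRing R] {m : ℕ} (hm : m ≠ 0)
    (g : ℕ → R) :
    ∑ k ∈ (2 * m).divisors, (-1 : R) ^ (2 * m / k + 1) * g k =
      ∑ k ∈ (2 * m).divisors, g k - 2 * ∑ k ∈ m.divisors, g k := by
  have hsign : ∀ k ∈ (2 * m).divisors,
      (-1 : R) ^ (2 * m / k + 1) * g k = g k - 2 * if k ∣ m then g k else 0 := by
    intro k hk
    have hparity := Nat.even_two_mul_div_iff (Nat.dvd_of_mem_divisors hk)
    rcases Nat.even_or_odd (2 * m / k) with heven | hodd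
    · rw [if_pos (hparity.mp heven), pow_succ, heven.neg_one_pow]
      ring
    · rw [if_neg (hparity.not.mp (Nat.not_even_iff_odd.mpr hodd)), pow_succ, hodd.neg_one_pow]
      ring
  rw [sum_congr rfl hsign, sum_sub_distrib, ← mul_sum, ← sum_filter,
    Nat.divisors_filter_dvd_of_dvd (by omega) (dvd_mul_left m 2)]

theorem sum_range_ite_eq_sum_range_padicValNat {k : ℕ} (hk : k ≠ 0) (L : ℕ → ℚ) :
    ∑ j ∈ range (k + 1), (if 2 ^ j ∣ k ∧ Even (k / 2 ^ j) then L (k / 2 ^ j) else 0) =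
      ∑ j ∈ range (padicValNat 2 k), L (k / 2 ^ j) := by
  rw [← sum_filter]
  congr 1
  ext j
  have hdvd : 2 ^ j ∣ k ∧ Even (k / 2 ^ j) ↔ j < padicValNat 2 k := by
    rw [← Nat.succ_le_iff, ← padicValNat_dvd_iff_le hk, even_iff_two_dvd, pow_succ]
    refine ⟨fun ⟨hj, h2⟩ => (Nat.dvd_div_iff_mul_dvd hj).mp h2, fun h => ?_⟩
    have hj : 2 ^ j ∣ k := dvd_of_mul_right_dvd h
    exact ⟨hj, (Nat.dvd_div_iff_mul_dvd hj).mpr h⟩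
  have hval : padicValNat 2 k < k + 1 :=
    (Nat.lt_two_pow_self.trans_le (Nat.le_of_dvd (Nat.pos_of_ne_zero hk) pow_padicValNat_dvd)).trans
      k.lt_succ_self
  simp only [mem_filter, mem_range, hdvd, and_iff_right_iff_imp]
  exact fun hj => hj.trans hval

theorem aExp_eq_sub {k : ℕ} (hk : k ≠ 0) (L : ℕ → ℚ) :
    aExp L k = (if Odd k then L k else 0) - ∑ j ∈ range (padicValNat 2 k), L (k / 2 ^ j) := by
  by_cases hodd : Odd k
  · have hval : padicValNat 2 k = 0 :=
      padicValNat.eq_zero_of_not_dvd (Nat.not_even_iff_odd.mpr hodd ∘ even_iff_two_dvd.mpr)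
    simp [aExp, hodd, hval]
  · simp [aExp, hodd, sum_range_ite_eq_sum_range_padicValNat hk, sub_eq_add_neg]

theorem aExp_two_mul {m : ℕ} (hm : m ≠ 0) (L : ℕ → ℚ) :
    aExp L (2 * m) = aExp L m - L (2 * m) - if Odd m then L m else 0 := by
  have hquot : ∀ j, 2 * m / 2 ^ (j + 1) = m / 2 ^ j := fun j => by
    rw [pow_succ', Nat.mul_div_mul_left _ _ two_pos]
  rw [aExp_eq_sub (by omega), aExp_eq_sub hm, padicValNat.mul two_ne_zero hm, padicValNat_self,
    add_comm, sum_range_succ']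
  simp only [hquot, pow_zero, Nat.div_one, Nat.not_odd_iff_even.mpr (even_two_mul m), if_false]
  ring

theorem sum_divisors_two_mul_mul_aExp {m : ℕ} (hm : m ≠ 0) (L : ℕ → ℚ) :
    ∑ k ∈ (2 * m).divisors, k * aExp L k =
      2 * ∑ k ∈ m.divisors, k * aExp L k - ∑ k ∈ (2 * m).divisors, k * L k := by
  have hterm : ∀ j ∈ m.divisors, ((2 * j : ℕ) : ℚ) * aExp L (2 * j) =
      2 * (j * aExp L j) - (2 * j : ℕ) * L (2 * j) - 2 * if Odd j then j * L j else 0 := by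
    intro j hj
    rw [aExp_two_mul ((Nat.pos_of_mem_divisors hj).ne') L]
    split_ifs <;> push_cast <;> ring
  rw [Nat.sum_divisors_two_mul hm, Nat.sum_divisors_two_mul hm, sum_congr rfl hterm,
    sum_sub_distrib, sum_sub_distrib, ← mul_sum, ← mul_sum, ← sum_filter]
  have hodd : ∑ k ∈ m.divisors with Odd k, (k : ℚ) * aExp L k =
      ∑ k ∈ m.divisors with Odd k, (k : ℚ) * L k :=
    sum_congr rfl fun k hk => by rw [aExp, if_pos (mem_filter.mp hk).2]
  rw [hodd]
  ring

theorem a_signed_divisor_sum (L : ℕ → ℚ) :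
    ∀ n : ℕ, 1 ≤ n →
      ∑ k ∈ n.divisors, (-1 : ℚ) ^ (n / k + 1) * k * aExp L k =
        (-1 : ℚ) ^ (n + 1) * ∑ k ∈ n.divisors, (↑k * L k) := by
  intro n hn
  rcases Nat.even_or_odd n with heven | hodd
  · obtain ⟨m, rfl⟩ := heven.two_dvd
    have hm : m ≠ 0 := by omega
    simp only [mul_assoc]
    rw [sum_divisors_two_mul_neg_one_pow hm, sum_divisors_two_mul_mul_aExp hm,
      (odd_two_mul_add_one m).neg_one_pow]
    ring
  · rw [hodd.add_one.neg_one_pow, one_mul]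
    refine sum_congr rfl fun k hk => ?_
    have hkn : k ∣ n := Nat.dvd_of_mem_divisors hk
    rw [(hodd.of_dvd_nat (Nat.div_dvd_of_dvd hkn)).add_one.neg_one_pow, one_mul, aExp,
      if_pos (hodd.of_dvd_nat hkn)]
end
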